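/- arXiv:math/0111302 — 3 statements merged into one kernel-verified Lean document; each statement's English description precedes it below -/
import Mathlib

section
/- For a pure (d-1)-dimensional simplicial complex Δ, the f-numbers are recovered from the short simplicial h-vector by f_j(Δ) = (j+1)^{-1} ∑_{i=0}^{j} C(d-1-i, d-1-j) h̃_i(Δ) for 0 ≤ j ≤ d-1. In particular, each f_j is a non-negative rational linear combination of h̃_0, ..., h̃_j. -/
/-!
Each face `G` with `j + 1` vertices arises from exactly `j + 1` pairs `(v, F)` with `F` a
`j`-vertex face of `lk v` and `G = F ∪ {v}`, so `∑_v f_{j-1}(lk v) = (j + 1) f_j(Δ)`.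
For each link, `h_i = ∑_k (-1)^(i-k) C(D-k, D-i) f_{k-1}` is inverted by
`f_{j-1} = ∑_i C(D-i, D-j) h_i`, because `C(D-i, D-j) C(D-k, D-i) = C(D-k, D-j) C(j-k, i-k)` and
the alternating sum `∑_t (-1)^t C(j-k, t)` vanishes unless `k = j`.
-/

open Finset

/-- An abstract simplicial complex on vertex set `V`, given by its finite set of faces. -/
structure SC (V : Type*) [DecidableEq V] where
  faces : Finset (Finset V)
  empty_mem : ∅ ∈ faces
  down_closed : ∀ F ∈ faces, ∀ G ⊆ F, G ∈ faces

variable {V : Type*} [DecidableEq V] [Fintype V]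

/-- The link of a vertex `v`. -/
def link (S : Finset (Finset V)) (v : V) : Finset (Finset V) :=
  S.filter fun F => v ∉ F ∧ insert v F ∈ S

/-- `fnum S m` is the number of faces of cardinality `m`, i.e. `f_{m-1}`. -/
def fnum (S : Finset (Finset V)) (m : ℕ) : ℕ := (S.filter fun F => F.card = m).card

/-- A complex is pure of dimension `d-1` if every face is contained in a face with `d` vertices. -/
def IsPure (S : Finset (Finset V)) (d : ℕ) : Prop :=
  ∀ F ∈ S, ∃ G ∈ S, F ⊆ G ∧ G.card = d

/-- The `h`-numbers of a complex `S` of dimension `D - 1`: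
`h_i = ∑_{j=0}^i (-1)^{i-j} C(D-j, D-i) f_{j-1}`. -/
def hnum (D : ℕ) (S : Finset (Finset V)) (i : ℕ) : ℚ :=
  ∑ j ∈ Finset.range (i + 1),
    (-1 : ℚ) ^ (i - j) * ((D - j).choose (D - i) : ℚ) * (fnum S j : ℚ)

lemma alternating_sum_range_choose_cast {R : Type*} [Ring R] (n : ℕ) :
    ∑ m ∈ range (n + 1), (-1 : R) ^ m * (n.choose m : R) = if n = 0 then 1 else 0 := by
  have := congrArg (Int.cast : ℤ → R) (Int.alternating_sum_range_choose (n := n))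
  push_cast at this
  exact this

lemma Nat.choose_sub_mul_choose_sub {D j k t : ℕ} (hkt : k + t ≤ j) (hj : j ≤ D) :
    (D - (k + t)).choose (D - j) * (D - k).choose (D - (k + t))
      = (D - k).choose (D - j) * (j - k).choose t := by
  rw [mul_comm, Nat.choose_mul (by omega),
    show D - k - (D - j) = j - k by omega, show D - (k + t) - (D - j) = j - k - t by omega,
    Nat.choose_symm (by omega)]

lemma sum_Ico_neg_one_pow_mul_choose_mul_choose {R : Type*} [CommRing R] {D j k : ℕ}
    (hkj : k ≤ j) (hj : j ≤ D) :
    ∑ i ∈ Ico k (j + 1),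
      (-1 : R) ^ (i - k) * ((D - i).choose (D - j) * (D - k).choose (D - i) : ℕ)
      = if k = j then 1 else 0 := by
  rw [sum_Ico_eq_sum_range, show j + 1 - k = j - k + 1 by omega]
  calc ∑ t ∈ range (j - k + 1),
        (-1 : R) ^ (k + t - k) * ((D - (k + t)).choose (D - j) * (D - k).choose (D - (k + t)) : ℕ)
      = ∑ t ∈ range (j - k + 1), ((D - k).choose (D - j) : R) *
          ((-1) ^ t * ((j - k).choose t : R)) := by
        refine sum_congr rfl fun t ht => ?_
        rw [Nat.choose_sub_mul_choose_sub (by rw [mem_range] at ht; omega) hj,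
          Nat.add_sub_cancel_left]
        push_cast
        ring
    _ = if k = j then 1 else 0 := by
        rw [← mul_sum, alternating_sum_range_choose_cast]
        by_cases hkj' : k = j
        · simp [hkj']
        · simp [hkj', show j - k ≠ 0 by omega]

/-- Binomial inversion of the relation between `h`- and `f`-numbers. -/
theorem sum_choose_mul_sum_neg_one_pow_choose {R : Type*} [CommRing R] (f : ℕ → R) {D j : ℕ}
    (hj : j ≤ D) :
    ∑ i ∈ range (j + 1), ((D - i).choose (D - j) : R) *
        ∑ k ∈ range (i + 1), (-1) ^ (i - k) * ((D - k).choose (D - i) : R) * f k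
      = f j := by
  simp_rw [mul_sum, range_eq_Ico]
  rw [← sum_Ico_Ico_comm]
  calc ∑ k ∈ Ico 0 (j + 1), ∑ i ∈ Ico k (j + 1),
        ((D - i).choose (D - j) : R) * ((-1) ^ (i - k) * ((D - k).choose (D - i) : R) * f k)
      = ∑ k ∈ Ico 0 (j + 1), (if k = j then 1 else 0) * f k := by
        refine sum_congr rfl fun k hk => ?_
        rw [← sum_Ico_neg_one_pow_mul_choose_mul_choose (by rw [mem_Ico] at hk; omega) hj,
          sum_mul]
        refine sum_congr rfl fun i _ => ?_
        push_cast
        ring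
    _ = f j := by simp

lemma fnum_link {α : Type*} [DecidableEq α] {S : Finset (Finset α)}
    (hdc : ∀ F ∈ S, ∀ G ⊆ F, G ∈ S) (v : α) (j : ℕ) :
    fnum (link S v) j = #{G ∈ S | G.card = j + 1 ∧ v ∈ G} := by
  unfold fnum link
  refine card_nbij' (insert v) (fun G => G.erase v) ?_ ?_ ?_ ?_
  · intro F hF
    simp only [coe_filter, mem_filter, Set.mem_ofPred_eq] at hF ⊢
    obtain ⟨⟨-, hvF, hins⟩, hcard⟩ := hF
    exact ⟨hins, by rw [card_insert_of_notMem hvF, hcard], mem_insert_self v F⟩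
  · intro G hG
    simp only [coe_filter, mem_filter, Set.mem_ofPred_eq] at hG ⊢
    obtain ⟨hGS, hcard, hvG⟩ := hG
    refine ⟨⟨hdc G hGS _ (erase_subset v G), notMem_erase v G, ?_⟩, ?_⟩
    · rwa [insert_erase hvG]
    · rw [card_erase_of_mem hvG, hcard, Nat.add_sub_cancel]
  · intro F hF
    simp only [coe_filter, mem_filter, Set.mem_ofPred_eq] at hF
    exact erase_insert hF.1.2.1
  · intro G hG
    simp only [coe_filter, Set.mem_ofPred_eq] at hG
    exact insert_erase hG.2.2

lemma sum_fnum_link {S : Finset (Finset V)} (hdc : ∀ F ∈ S, ∀ G ⊆ F, G ∈ S) (j : ℕ) :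
    ∑ v, fnum (link S v) j = (j + 1) * fnum S (j + 1) := by
  simp_rw [fnum_link hdc, ← filter_filter]
  have := sum_card_bipartiteAbove_eq_sum_card_bipartiteBelow (s := univ)
    (t := {G ∈ S | G.card = j + 1}) (r := fun v G => v ∈ G)
  simp only [bipartiteAbove, bipartiteBelow, filter_mem_eq_inter, univ_inter] at this
  rw [this, sum_const_nat fun G hG => (mem_filter.1 hG).2, fnum, mul_comm]

theorem statement3_general (d : ℕ) (Δ : SC V)
    (j : ℕ) (hj : j ≤ d - 1) :
    (fnum Δ.faces (j + 1) : ℚ)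
      = ((j : ℚ) + 1)⁻¹ *
          ∑ i ∈ Finset.range (j + 1),
            ((d - 1 - i).choose (d - 1 - j) : ℚ) *
              (∑ v : V, hnum (d - 1) (link Δ.faces v) i) := by
  have hinv : ∑ i ∈ range (j + 1), ((d - 1 - i).choose (d - 1 - j) : ℚ) *
      (∑ v : V, hnum (d - 1) (link Δ.faces v) i)
        = ∑ v : V, (fnum (link Δ.faces v) j : ℚ) := by
    simp_rw [mul_sum]
    rw [sum_comm]
    exact sum_congr rfl fun v _ => sum_choose_mul_sum_neg_one_pow_choose _ hj
  have hcount : ∑ v : V, (fnum (link Δ.faces v) j : ℚ) = (j + 1) * fnum Δ.faces (j + 1) := by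
    exact_mod_cast sum_fnum_link Δ.down_closed j
  rw [hinv, hcount, inv_mul_cancel_left₀ (by positivity)]

/-- f_j(Δ) = (j+1)⁻¹ ∑_{i=0}^{j} C(d-1-i, d-1-j) h̃_i(Δ) for 0 ≤ j ≤ d-1. -/
theorem statement3 (d : ℕ) (Δ : SC V) (hpure : IsPure Δ.faces d)
    (j : ℕ) (hj : j ≤ d - 1) :
    (fnum Δ.faces (j + 1) : ℚ)
      = ((j : ℚ) + 1)⁻¹ *
          ∑ i ∈ Finset.range (j + 1),
            ((d - 1 - i).choose (d - 1 - j) : ℚ) *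
              (∑ v : V, hnum (d - 1) (link Δ.faces v) i) :=
  statement3_general d Δ j hj
end

section
/- For integers d, i, l with 0 ≤ l ≤ i ≤ ⌊(d-1)/2⌋, the sequence a_j := (1/(j+1)) C(d-1-l, d-1-j) for l ≤ j ≤ i is non-decreasing in j; equivalently, (1/(j+1)) C(d-1-l, d-1-j) ≥ (1/j) C(d-1-l, d-j) for all l+1 ≤ j ≤ i. Consequently, the alternating sum ∑_{j=l}^{i} (-1)^{i-j} (1/(j+1)) C(d-1-l, d-1-j) is non-negative. -/
/-!
With `n = d - 1 - l` and `k = d - 1 - j`, the identity `C(n, k + 1) (k + 1) = C(n, k) (n - k)`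
reduces the monotonicity step to `(j + 1)(j - l) ≤ j (d - j)`, which holds because
`j - l ≤ j` and `j + 1 ≤ d - j` for `j ≤ (d - 1) / 2`. The alternating sum `S i` of a
non-decreasing sequence with `0 ≤ a l` satisfies `0 ≤ S i ≤ a i`, since `S (i + 1) = a (i + 1) - S i`.
-/

open Finset

section AlternatingSum

variable {R : Type*} [CommRing R]

lemma sum_Icc_succ_alternating (a : ℕ → R) {l i : ℕ} (hli : l ≤ i + 1) :
    ∑ j ∈ Icc l (i + 1), (-1 : R) ^ (i + 1 - j) * a j
      = a (i + 1) - ∑ j ∈ Icc l i, (-1 : R) ^ (i - j) * a j := by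
  rw [sum_Icc_succ_top hli, Nat.sub_self, pow_zero, one_mul, sub_eq_neg_add, ← sum_neg_distrib]
  congr 1
  refine sum_congr rfl fun j hj => ?_
  rw [Nat.sub_add_comm (mem_Icc.1 hj).2, pow_succ]
  ring

variable [PartialOrder R] [IsOrderedRing R]

lemma alternating_sum_mem_Icc (a : ℕ → R) {l i : ℕ} (hli : l ≤ i) (ha : 0 ≤ a l)
    (hmono : ∀ j, l ≤ j → j < i → a j ≤ a (j + 1)) :
    0 ≤ ∑ j ∈ Icc l i, (-1 : R) ^ (i - j) * a j ∧
      ∑ j ∈ Icc l i, (-1 : R) ^ (i - j) * a j ≤ a i := by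
  induction i, hli using Nat.le_induction with
  | base => simpa using ha
  | succ i hli ih =>
    obtain ⟨hS, hSa⟩ := ih fun j hlj hji => hmono j hlj (by omega)
    have hstep := hmono i hli (by omega)
    rw [sum_Icc_succ_alternating a (by omega)]
    exact ⟨sub_nonneg.2 (hSa.trans hstep), sub_le_self _ hS⟩

lemma alternating_sum_nonneg (a : ℕ → R) {l i : ℕ} (hli : l ≤ i) (ha : 0 ≤ a l)
    (hmono : ∀ j, l ≤ j → j < i → a j ≤ a (j + 1)) :
    0 ≤ ∑ j ∈ Icc l i, (-1 : R) ^ (i - j) * a j :=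
  (alternating_sum_mem_Icc a hli ha hmono).1

end AlternatingSum

lemma Nat.choose_succ_right_mul_le {n k a b : ℕ} (h : (n - k) * a ≤ (k + 1) * b) :
    n.choose (k + 1) * a ≤ n.choose k * b := by
  refine Nat.le_of_mul_le_mul_right ?_ k.succ_pos
  calc n.choose (k + 1) * a * (k + 1) = n.choose k * ((n - k) * a) := by
        rw [mul_right_comm, Nat.choose_succ_right_eq, mul_assoc]
    _ ≤ n.choose k * ((k + 1) * b) := Nat.mul_le_mul_left _ h
    _ = n.choose k * b * (k + 1) := by ring

lemma choose_div_le_choose_div {d l j : ℕ} (hlj : l + 1 ≤ j) (hjd : j ≤ (d - 1) / 2) :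
    (1 / (j : ℚ)) * ((d - 1 - l).choose (d - j) : ℚ)
      ≤ (1 / ((j : ℚ) + 1)) * ((d - 1 - l).choose (d - 1 - j) : ℚ) := by
  have hsucc : d - j = d - 1 - j + 1 := by omega
  have hnat : (d - 1 - l).choose (d - j) * (j + 1) ≤ (d - 1 - l).choose (d - 1 - j) * j := by
    rw [hsucc]
    apply Nat.choose_succ_right_mul_le
    calc (d - 1 - l - (d - 1 - j)) * (j + 1) = (j - l) * (j + 1) := by congr 1; omega
      _ ≤ j * (d - j) := Nat.mul_le_mul (by omega) (by omega)
      _ = (d - 1 - j + 1) * j := by rw [← hsucc, mul_comm]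
  have hj : (0 : ℚ) < j := by exact_mod_cast (by omega : 0 < j)
  rw [one_div_mul_eq_div, one_div_mul_eq_div, div_le_div_iff₀ hj (by positivity)]
  exact_mod_cast hnat

/-- for 0 ≤ l ≤ i ≤ ⌊(d-1)/2⌋, the sequence (1/(j+1)) C(d-1-l, d-1-j) is
non-decreasing in j for l ≤ j ≤ i, and consequently
∑_{j=l}^{i} (-1)^{i-j} (1/(j+1)) C(d-1-l, d-1-j) ≥ 0. -/
theorem statement5 (d i l : ℕ) (hl : l ≤ i) (hi : i ≤ (d - 1) / 2) :
    (∀ j, l + 1 ≤ j → j ≤ i →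
      (1 / (j : ℚ)) * ((d - 1 - l).choose (d - j) : ℚ)
        ≤ (1 / ((j : ℚ) + 1)) * ((d - 1 - l).choose (d - 1 - j) : ℚ)) ∧
    0 ≤ ∑ j ∈ Finset.Icc l i,
        (-1 : ℚ) ^ (i - j) * (1 / ((j : ℚ) + 1)) * ((d - 1 - l).choose (d - 1 - j) : ℚ) := by
  have hmono : ∀ j, l + 1 ≤ j → j ≤ i →
      (1 / (j : ℚ)) * ((d - 1 - l).choose (d - j) : ℚ)
        ≤ (1 / ((j : ℚ) + 1)) * ((d - 1 - l).choose (d - 1 - j) : ℚ) :=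
    fun j hlj hji => choose_div_le_choose_div hlj (hji.trans hi)
  refine ⟨hmono, ?_⟩
  simp_rw [mul_assoc]
  refine alternating_sum_nonneg (fun j => 1 / ((j : ℚ) + 1) * ((d - 1 - l).choose (d - 1 - j) : ℚ))
    hl (by positivity) fun j hlj hji => ?_
  have h := hmono (j + 1) (by omega) (by omega)
  rw [show d - (j + 1) = d - 1 - j by omega] at h
  exact_mod_cast h
end

section
/- For any sequence of real numbers h̃_0, ..., h̃_{d-1} and setting f_j = (j+1)^{-1} ∑_{i=0}^{j} C(d-1-i, d-1-j) h̃_i, if all h̃_i ≥ 0 then (-1)^i ∑_{j=0}^{i} (-1)^j f_j ≥ 0 for all 0 ≤ i ≤ ⌊(d-1)/2⌋. -/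
/-!
Exchanging the two summations writes `(-1)^i ∑_{j ≤ i} (-1)^j f_j` as
`∑_{l ≤ i} ((-1)^i ∑_{j=l}^{i} (-1)^j C(d-1-l, d-1-j) / (j+1)) h̃_l`. For `i ≤ ⌊(d-1)/2⌋` the
coefficients `C(d-1-l, d-1-j) / (j+1)` are non-decreasing in `j ∈ [l, i]`, and an alternating sum
of a non-negative non-decreasing sequence whose last term carries the sign `+` is non-negative.
-/

open Finset

section AlternatingSum

variable {R : Type*} [Ring R] [PartialOrder R] [IsOrderedRing R] {g : ℕ → R} {l n : ℕ}

theorem alternating_sum_Icc_mem_Icc (hln : l ≤ n) (hg : MonotoneOn g (Set.Icc l n))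
    (hl : 0 ≤ g l) :
    0 ≤ (-1) ^ n * ∑ j ∈ Icc l n, (-1) ^ j * g j ∧
      (-1) ^ n * ∑ j ∈ Icc l n, (-1) ^ j * g j ≤ g n := by
  induction n, hln using Nat.le_induction with
  | base => simpa [← mul_assoc, ← pow_add, ← two_mul, pow_mul] using hl
  | succ n hln ih =>
    obtain ⟨ih_nonneg, ih_le⟩ := ih (hg.mono (Set.Icc_subset_Icc_right n.le_succ))
    have hstep : g n ≤ g (n + 1) := hg ⟨hln, n.le_succ⟩ ⟨hln.trans n.le_succ, le_rfl⟩ n.le_succ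
    have hrec : (-1) ^ (n + 1) * ∑ j ∈ Icc l (n + 1), (-1) ^ j * g j
        = g (n + 1) - (-1) ^ n * ∑ j ∈ Icc l n, (-1) ^ j * g j := by
      rw [sum_Icc_succ_top (by omega), mul_add, ← mul_assoc, ← pow_add, ← two_mul, pow_mul]
      simp only [pow_succ, mul_neg, mul_one, neg_mul, even_two, Even.neg_pow, one_pow, one_mul]
      abel
    rw [hrec]
    exact ⟨sub_nonneg.2 (ih_le.trans hstep), sub_le_self _ ih_nonneg⟩

theorem alternating_sum_Icc_nonneg (hg : MonotoneOn g (Set.Icc l n)) (hl : 0 ≤ g l) :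
    0 ≤ (-1) ^ n * ∑ j ∈ Icc l n, (-1) ^ j * g j := by
  rcases le_or_gt l n with hln | hnl
  · exact (alternating_sum_Icc_mem_Icc hln hg hl).1
  · simp [Icc_eq_empty_of_lt hnl]

end AlternatingSum

theorem Nat.mul_choose_succ_le {a b p q : ℕ} (h : p * (a - b) ≤ q * (b + 1)) :
    p * a.choose (b + 1) ≤ q * a.choose b :=
  Nat.le_of_mul_le_mul_right (c := b + 1) (by
    calc p * a.choose (b + 1) * (b + 1) = a.choose b * (p * (a - b)) := by
          rw [mul_assoc, Nat.choose_succ_right_eq]; ring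
      _ ≤ a.choose b * (q * (b + 1)) := Nat.mul_le_mul_left _ h
      _ = q * a.choose b * (b + 1) := by ring) b.succ_pos

theorem monotoneOn_choose_sub_div (D l : ℕ) :
    MonotoneOn (fun j : ℕ ↦ ((D - l).choose (D - j) : ℝ) / (j + 1)) (Set.Icc l (D / 2)) := by
  refine monotoneOn_of_le_succ Set.ordConnected_Icc fun j _ hj hj' ↦ ?_
  simp only [Order.succ_eq_add_one, Set.mem_Icc] at hj hj' ⊢
  have hnat : (j + 2) * (D - l).choose (D - (j + 1) + 1) ≤ (j + 1) * (D - l).choose (D - (j + 1)) :=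
    Nat.mul_choose_succ_le ((Nat.mul_le_mul (by omega) (by omega)).trans_eq (mul_comm _ _))
  rw [show D - (j + 1) + 1 = D - j by omega] at hnat
  rw [div_le_div_iff₀ (by positivity) (by positivity)]
  have hreal := (Nat.cast_le (α := ℝ)).2 hnat
  push_cast at hreal ⊢
  linarith

/-- if f_j = (1/(j+1)) ∑_{i=0}^j C(d-1-i, d-1-j) h̃_i with all h̃_i ≥ 0, then
(-1)^i ∑_{j=0}^i (-1)^j f_j ≥ 0 for 0 ≤ i ≤ ⌊(d-1)/2⌋. -/
theorem statement12 (d : ℕ) (ht f : ℕ → ℝ)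
    (hpos : ∀ i ≤ d - 1, 0 ≤ ht i)
    (hf : ∀ j ≤ d - 1, f j = (1 / ((j : ℝ) + 1)) *
      ∑ i ∈ Finset.range (j + 1), ((d - 1 - i).choose (d - 1 - j) : ℝ) * ht i) :
    ∀ i ≤ (d - 1) / 2, 0 ≤ (-1 : ℝ) ^ i * ∑ j ∈ Finset.range (i + 1), (-1 : ℝ) ^ j * f j := by
  intro i hi
  set D := d - 1
  set c : ℕ → ℕ → ℝ := fun l j ↦ ((D - l).choose (D - j) : ℝ) / (j + 1)
  have hswap : (-1) ^ i * ∑ j ∈ range (i + 1), (-1) ^ j * f j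
      = ∑ l ∈ range (i + 1), ((-1) ^ i * ∑ j ∈ Icc l i, (-1) ^ j * c l j) * ht l := by
    have hexpand : ∀ j ∈ range (i + 1),
        (-1) ^ j * f j = ∑ l ∈ range (j + 1), (-1) ^ j * c l j * ht l := by
      intro j hj
      rw [hf j (by grind), mul_sum, mul_sum]
      refine sum_congr rfl fun l _ ↦ ?_
      simp only [c]
      ring
    rw [sum_congr rfl hexpand]
    simp only [range_eq_Ico]
    rw [← sum_Ico_Ico_comm]
    simp only [mul_sum, sum_mul, Ico_add_one_right_eq_Icc, mul_assoc]
  rw [hswap]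
  refine sum_nonneg fun l hl ↦ mul_nonneg (alternating_sum_Icc_nonneg ?_ (by positivity)) ?_
  · exact (monotoneOn_choose_sub_div D l).mono (Set.Icc_subset_Icc_right hi)
  · exact hpos l (by grind)
end
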